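/- Symmetry of nominal equality: if ∇ ⊢ t₁ ≈ t₂ then ∇ ⊢ t₂ ≈ t₁. -/

import Mathlib

abbrev Atom := ℕ
abbrev Var := ℕ
abbrev Perm := List (Atom × Atom)

def swap (p : Atom × Atom) (a : Atom) : Atom :=
  if a = p.1 then p.2 else if a = p.2 then p.1 else a

def permAtom : Perm → Atom → Atom
  | [], a => a
  | p :: π, a => swap p (permAtom π a)

def ds (π π' : Perm) : Set Atom := {a | permAtom π a ≠ permAtom π' a}

inductive Trm : Type
  | unit : Trm
  | pair : Trm → Trm → Trm
  | fn : ℕ → Trm → Trm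
  | atom : Atom → Trm
  | abs : Atom → Trm → Trm
  | susp : Perm → Var → Trm

def permTrm (π : Perm) : Trm → Trm
  | .unit => .unit
  | .pair t₁ t₂ => .pair (permTrm π t₁) (permTrm π t₂)
  | .fn f t => .fn f (permTrm π t)
  | .atom a => .atom (permAtom π a)
  | .abs a t => .abs (permAtom π a) (permTrm π t)
  | .susp π' X => .susp (π ++ π') X

abbrev Env := Set (Atom × Var)

inductive fresh (Γ : Env) (a : Atom) : Trm → Prop
  | unit : fresh Γ a .unit
  | pair {t₁ t₂} : fresh Γ a t₁ → fresh Γ a t₂ → fresh Γ a (.pair t₁ t₂)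
  | fn {f t} : fresh Γ a t → fresh Γ a (.fn f t)
  | abs₁ {t} : fresh Γ a (.abs a t)
  | abs₂ {b t} : a ≠ b → fresh Γ a t → fresh Γ a (.abs b t)
  | atom {b} : a ≠ b → fresh Γ a (.atom b)
  | susp {π X} : (permAtom π.reverse a, X) ∈ Γ → fresh Γ a (.susp π X)

inductive equ (Γ : Env) : Trm → Trm → Prop
  | unit : equ Γ .unit .unit
  | pair {t₁ t₂ s₁ s₂} : equ Γ t₁ t₂ → equ Γ s₁ s₂ → equ Γ (.pair t₁ s₁) (.pair t₂ s₂)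
  | fn {f t₁ t₂} : equ Γ t₁ t₂ → equ Γ (.fn f t₁) (.fn f t₂)
  | abs₁ {a t₁ t₂} : equ Γ t₁ t₂ → equ Γ (.abs a t₁) (.abs a t₂)
  | abs₂ {a b t₁ t₂} : a ≠ b → fresh Γ a t₂ → equ Γ t₁ (permTrm [(a, b)] t₂) →
      equ Γ (.abs a t₁) (.abs b t₂)
  | atom {a} : equ Γ (.atom a) (.atom a)
  | susp {π π' X} : (∀ c ∈ ds π π', (c, X) ∈ Γ) → equ Γ (.susp π X) (.susp π' X)

inductive weak : Trm → Trm → Prop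
  | unit : weak .unit .unit
  | atom {a} : weak (.atom a) (.atom a)
  | fn {f t t'} : weak t t' → weak (.fn f t) (.fn f t')
  | pair {t₁ t₂ s₁ s₂} : weak t₁ s₁ → weak t₂ s₂ → weak (.pair t₁ t₂) (.pair s₁ s₂)
  | abs {a t t'} : weak t t' → weak (.abs a t) (.abs a t')
  | susp {π π' X} : ds π π' = ∅ → weak (.susp π X) (.susp π' X)

def subst (σ : Var → Option Trm) : Trm → Trm
  | .unit => .unit
  | .pair t₁ t₂ => .pair (subst σ t₁) (subst σ t₂)
  | .fn f t => .fn f (subst σ t)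
  | .atom a => .atom a
  | .abs a t => .abs a (subst σ t)
  | .susp π X =>
      match σ X with
      | some t => permTrm π t
      | none => .susp π X


/-!
Induction on the derivation of `t₁ ≈ t₂`. The only non-trivial case is the asymmetric rule
`a.t₁ ≈ b.t₂` from `a # t₂` and `t₁ ≈ (a b) • t₂`. For `b # t₁`: equivariance of freshness gives
`b # (a b) • t₂`, and `≈` transports freshness from right to left. For `t₂ ≈ (b a) • t₁`: applying
`(b a)` to the induction hypothesis `(a b) • t₂ ≈ t₁` (equivariance of `≈`) gives
`(b a) • (a b) • t₂ ≈ (b a) • t₁`, and `(b a) • (a b) • t₂` differs from `t₂` only by suspensions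
whose permutations act identically on atoms, i.e. the two are related by `weak`, which `≈` respects.
-/

theorem swap_fst (a b : Atom) : swap (a, b) a = b := if_pos rfl

theorem swap_of_ne {a b c : Atom} (ha : c ≠ a) (hb : c ≠ b) : swap (a, b) c = c := by
  simp [swap, ha, hb]

theorem swap_comm (a b c : Atom) : swap (b, a) c = swap (a, b) c := by
  unfold swap; split_ifs <;> simp_all

theorem swap_swap (p : Atom × Atom) (a : Atom) : swap p (swap p a) = a := by
  unfold swap; split_ifs <;> simp_all

theorem permAtom_append (π ρ : Perm) (a : Atom) :
    permAtom (π ++ ρ) a = permAtom π (permAtom ρ a) := by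
  induction π with
  | nil => rfl
  | cons p π ih => simp [permAtom, ih]

theorem permAtom_reverse_permAtom (π : Perm) (a : Atom) :
    permAtom π.reverse (permAtom π a) = a := by
  induction π generalizing a with
  | nil => rfl
  | cons p π ih => simp [permAtom, permAtom_append, swap_swap, ih]

theorem permAtom_permAtom_reverse (π : Perm) (a : Atom) :
    permAtom π (permAtom π.reverse a) = a := by
  simpa using permAtom_reverse_permAtom π.reverse a

theorem permAtom_injective (π : Perm) : Function.Injective (permAtom π) :=
  Function.LeftInverse.injective (permAtom_reverse_permAtom π)

theorem permAtom_reverse_congr {π π' : Perm} (h : ∀ a, permAtom π a = permAtom π' a)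
    (a : Atom) : permAtom π.reverse a = permAtom π'.reverse a := by
  apply permAtom_injective π
  rw [permAtom_permAtom_reverse, h, permAtom_permAtom_reverse]

theorem permAtom_swap (π : Perm) (a b c : Atom) :
    permAtom π (swap (a, b) c) = swap (permAtom π a, permAtom π b) (permAtom π c) := by
  have hinj : ∀ x y, permAtom π x = permAtom π y ↔ x = y :=
    fun _ _ => (permAtom_injective π).eq_iff
  unfold swap
  split_ifs <;> simp_all

theorem ds_eq_empty_iff {π π' : Perm} : ds π π' = ∅ ↔ ∀ a, permAtom π a = permAtom π' a := by
  simp [ds, Set.eq_empty_iff_forall_notMem]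

theorem permTrm_nil (t : Trm) : permTrm [] t = t := by
  induction t <;> simp_all [permTrm, permAtom]

theorem permTrm_append (π ρ : Perm) (t : Trm) :
    permTrm (π ++ ρ) t = permTrm π (permTrm ρ t) := by
  induction t <;> simp_all [permTrm, permAtom_append]

theorem fresh_permTrm {Γ : Env} {a : Atom} {t : Trm} (π : Perm) (h : fresh Γ a t) :
    fresh Γ (permAtom π a) (permTrm π t) := by
  induction h with
  | unit => exact .unit
  | pair _ _ ih₁ ih₂ => exact .pair ih₁ ih₂
  | fn _ ih => exact .fn ih
  | abs₁ => exact .abs₁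
  | abs₂ hne _ ih => exact .abs₂ ((permAtom_injective π).ne hne) ih
  | atom hne => exact .atom ((permAtom_injective π).ne hne)
  | susp hmem =>
    apply fresh.susp
    rwa [List.reverse_append, permAtom_append, permAtom_reverse_permAtom]

theorem fresh_swap_fst {Γ : Env} {a b : Atom} {t : Trm} (h : fresh Γ a t) :
    fresh Γ b (permTrm [(a, b)] t) := by
  simpa only [permAtom, swap_fst] using fresh_permTrm [(a, b)] h

theorem fresh_swap_of_ne {Γ : Env} {a b c : Atom} {t : Trm} (ha : c ≠ a) (hb : c ≠ b)
    (h : fresh Γ c t) : fresh Γ c (permTrm [(a, b)] t) := by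
  simpa only [permAtom, swap_of_ne ha hb] using fresh_permTrm [(a, b)] h

theorem weak_permTrm {π π' : Perm} (h : ∀ a, permAtom π a = permAtom π' a) (t : Trm) :
    weak (permTrm π t) (permTrm π' t) := by
  induction t with
  | unit => exact .unit
  | pair _ _ ih₁ ih₂ => exact .pair ih₁ ih₂
  | fn _ _ ih => exact .fn ih
  | atom a => simpa only [permTrm, h] using weak.atom
  | abs a _ ih => simpa only [permTrm, h] using weak.abs ih
  | susp ρ X => exact .susp (ds_eq_empty_iff.2 fun a => by simp [permAtom_append, h])

namespace weak

theorem permTrm {t t' : Trm} (π : Perm) (h : weak t t') :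
    weak (permTrm π t) (permTrm π t') := by
  induction h with
  | unit => exact .unit
  | atom => exact .atom
  | fn _ ih => exact .fn ih
  | pair _ _ ih₁ ih₂ => exact .pair ih₁ ih₂
  | abs _ ih => exact .abs ih
  | susp hds =>
    exact .susp (ds_eq_empty_iff.2 fun a => by simp [permAtom_append, ds_eq_empty_iff.1 hds])

theorem fresh {Γ : Env} {c : Atom} {t t' : Trm} (h : weak t t') (hc : _root_.fresh Γ c t) :
    _root_.fresh Γ c t' := by
  induction h with
  | unit => exact hc
  | atom => exact hc
  | fn _ ih => cases hc with | fn hc => exact .fn (ih hc)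
  | pair _ _ ih₁ ih₂ => cases hc with | pair hc₁ hc₂ => exact .pair (ih₁ hc₁) (ih₂ hc₂)
  | abs _ ih =>
    cases hc with
    | abs₁ => exact .abs₁
    | abs₂ hne hc => exact .abs₂ hne (ih hc)
  | susp hds =>
    cases hc with
    | susp hmem => exact .susp (by rwa [← permAtom_reverse_congr (ds_eq_empty_iff.1 hds)])

end weak

namespace equ

theorem weak_left {Γ : Env} {s s' t : Trm} (h : equ Γ s t) (hs : weak s s') : equ Γ s' t := by
  induction h generalizing s' with
  | unit => cases hs; exact .unit
  | atom => cases hs; exact .atom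
  | fn _ ih => cases hs with | fn hs => exact .fn (ih hs)
  | pair _ _ ih₁ ih₂ => cases hs with | pair hs₁ hs₂ => exact .pair (ih₁ hs₁) (ih₂ hs₂)
  | abs₁ _ ih => cases hs with | abs hs => exact .abs₁ (ih hs)
  | abs₂ hne hf _ ih => cases hs with | abs hs => exact .abs₂ hne hf (ih hs)
  | susp hds =>
    cases hs with
    | susp hπ => exact .susp fun c hc => hds c (by simpa [ds, ds_eq_empty_iff.1 hπ] using hc)

theorem weak_right {Γ : Env} {s t t' : Trm} (h : equ Γ s t) (ht : weak t t') : equ Γ s t' := by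
  induction h generalizing t' with
  | unit => cases ht; exact .unit
  | atom => cases ht; exact .atom
  | fn _ ih => cases ht with | fn ht => exact .fn (ih ht)
  | pair _ _ ih₁ ih₂ => cases ht with | pair ht₁ ht₂ => exact .pair (ih₁ ht₁) (ih₂ ht₂)
  | abs₁ _ ih => cases ht with | abs ht => exact .abs₁ (ih ht)
  | abs₂ hne hf _ ih => cases ht with | abs ht => exact .abs₂ hne (ht.fresh hf) (ih (ht.permTrm _))
  | susp hds =>
    cases ht with
    | susp hπ => exact .susp fun c hc => hds c (by simpa [ds, ds_eq_empty_iff.1 hπ] using hc)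

end equ

theorem equ_permTrm {Γ : Env} {t s : Trm} (π : Perm) (h : equ Γ t s) :
    equ Γ (permTrm π t) (permTrm π s) := by
  induction h with
  | unit => exact .unit
  | pair _ _ ih₁ ih₂ => exact .pair ih₁ ih₂
  | fn _ ih => exact .fn ih
  | abs₁ _ ih => exact .abs₁ ih
  | atom => exact .atom
  | susp hds =>
    refine .susp fun c hc => hds c fun h => hc ?_
    simp only [permAtom_append, h]
  | @abs₂ a b u₁ u₂ hne hf _ ih =>
    refine .abs₂ ((permAtom_injective π).ne hne) (fresh_permTrm π hf) ?_
    rw [← permTrm_append] at ih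
    rw [← permTrm_append]
    -- `π ∘ (a b) = (π a π b) ∘ π`
    exact ih.weak_right <|
      weak_permTrm (fun x => by simp [permAtom_append, permAtom, permAtom_swap]) u₂

theorem fresh_of_equ {Γ : Env} {c : Atom} {u v : Trm} (h : equ Γ u v) (hc : fresh Γ c v) :
    fresh Γ c u := by
  induction h with
  | unit => exact hc
  | atom => exact hc
  | pair _ _ ih₁ ih₂ => cases hc with | pair hc₁ hc₂ => exact .pair (ih₁ hc₁) (ih₂ hc₂)
  | fn _ ih => cases hc with | fn hc => exact .fn (ih hc)
  | abs₁ _ ih =>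
    cases hc with
    | abs₁ => exact .abs₁
    | abs₂ hne hc => exact .abs₂ hne (ih hc)
  | @abs₂ a b u₁ u₂ _ hf _ ih =>
    rcases eq_or_ne c a with rfl | hca
    · exact .abs₁
    refine .abs₂ hca (ih ?_)
    rcases eq_or_ne c b with rfl | hcb
    · exact fresh_swap_fst hf
    · cases hc with
      | abs₁ => exact absurd rfl hcb
      | abs₂ _ hc => exact fresh_swap_of_ne hca hcb hc
  | @susp π π' X hds =>
    cases hc with
    | susp hmem =>
      refine .susp ?_
      by_cases hd : permAtom π.reverse c ∈ ds π π'
      · exact hds _ hd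
      · have hπ' : permAtom π' (permAtom π.reverse c) = c := by
          simpa [ds, permAtom_permAtom_reverse, eq_comm] using hd
        rwa [← hπ', permAtom_reverse_permAtom] at hmem

theorem equ_symm (Γ : Env) (t₁ t₂ : Trm)
    (h : equ Γ t₁ t₂) : equ Γ t₂ t₁ := by
  induction h with
  | unit => exact .unit
  | pair _ _ ih₁ ih₂ => exact .pair ih₁ ih₂
  | fn _ ih => exact .fn ih
  | abs₁ _ ih => exact .abs₁ ih
  | atom => exact .atom
  | susp hds => exact .susp fun c hc => hds c (Ne.symm hc)
  | @abs₂ a b u₁ u₂ hne hf h ih =>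
    refine .abs₂ hne.symm (fresh_of_equ h (fresh_swap_fst hf)) ?_
    have hswap := equ_permTrm [(b, a)] ih
    rw [← permTrm_append] at hswap
    have hid : ∀ x, permAtom ([(b, a)] ++ [(a, b)]) x = permAtom [] x := fun x => by
      simp [permAtom, swap_comm b a, swap_swap]
    simpa only [permTrm_nil] using hswap.weak_left (weak_permTrm hid u₂)
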